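/- arXiv:2004.07494 — 3 statements merged into one kernel-verified Lean document; each statement's English description precedes it below -/
import Mathlib

section
/- Let T1, T2 be bounded linear operators on H with A-adjoints S1 = T1^{#_A}, S2 = T2^{#_A} (i.e. A∘S_i = T_i*∘A and range(S_i) ⊆ closure(range A)). Then min(‖T1+T2‖_A², ‖T1-T2‖_A²) ≥ max(‖S1∘T1 + S2∘T2‖_A - ‖S1∘T2 + S2∘T1‖_A, ‖T1∘S1 + T2∘S2‖_A - ‖T1∘S2 + T2∘S1‖_A). -/
/-!
Positivity of `A` gives `A = B† B`, so `‖x‖_A = ‖B x‖` and the `A`-seminorm inherits the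
triangle and Cauchy–Schwarz inequalities. If `S` is an `A`-adjoint of `T`, then `S T` is
`A`-selfadjoint, and an `A`-selfadjoint `R` satisfies `‖R x‖_A² ≤ ‖x‖_A ‖R² x‖_A`; applying this
along `R, R², R⁴, …` gives Reid's inequality `‖R x‖_A ≤ ‖R‖ ‖x‖_A`. Hence `T` is `A`-bounded,
`‖T x‖_A ≤ ‖T‖_A ‖x‖_A` for every `x`, and `‖S T‖_A, ‖T S‖_A ≤ ‖T‖_A²`.

Now `S₁ + S₂` is an `A`-adjoint of `T₁ + T₂` and
`(S₁ + S₂)(T₁ + T₂) = (S₁T₁ + S₂T₂) + (S₁T₂ + S₂T₁)`, so the triangle inequality bounds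
`‖S₁T₁ + S₂T₂‖_A - ‖S₁T₂ + S₂T₁‖_A` by `‖T₁ + T₂‖_A²`; the same works for `(T₁ + T₂)(S₁ + S₂)`,
and replacing `(T₂, S₂)` by `(-T₂, -S₂)` gives the bounds by `‖T₁ - T₂‖_A²`.
-/

open scoped InnerProductSpace
open ContinuousLinearMap

variable {H : Type*} [NormedAddCommGroup H] [InnerProductSpace ℂ H] [CompleteSpace H]

/-- The `A`-seminorm `‖x‖_A = √⟨Ax,x⟩`. -/
noncomputable def aNorm (A : H →L[ℂ] H) (x : H) : ℝ :=
  Real.sqrt (⟪A x, x⟫_ℂ).re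

/-- The `A`-numerical radius `w_A(T) = sup {|⟨ATx,x⟩| : x ∈ H, ‖x‖_A = 1}`. -/
noncomputable def wA (A T : H →L[ℂ] H) : ℝ :=
  sSup {r : ℝ | ∃ x : H, aNorm A x = 1 ∧ r = ‖⟪A (T x), x⟫_ℂ‖}

/-- The `A`-operator seminorm `‖T‖_A = sup {‖Tx‖_A : x ∈ closure (range A), ‖x‖_A = 1}`. -/
noncomputable def aOpNorm (A T : H →L[ℂ] H) : ℝ :=
  sSup {r : ℝ | ∃ x : H, x ∈ closure (Set.range (⇑A)) ∧ aNorm A x = 1 ∧ r = aNorm A (T x)}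

/-- The `B`-numerical radius of the operator matrix `[[T1,T2],[T3,T4]]` acting on `H ⊕ H` by
`(x, y) ↦ (T1 x + T2 y, T3 x + T4 y)`, where `B = [[A,0],[0,A]]`:
`w_B(T) = sup {|⟨BTz,z⟩| : z ∈ H ⊕ H, ‖z‖_B = 1}`. -/
noncomputable def wB (A T1 T2 T3 T4 : H →L[ℂ] H) : ℝ :=
  sSup {r : ℝ | ∃ x y : H, Real.sqrt ((⟪A x, x⟫_ℂ).re + (⟪A y, y⟫_ℂ).re) = 1 ∧
    r = ‖⟪A (T1 x + T2 y), x⟫_ℂ + ⟪A (T3 x + T4 y), y⟫_ℂ‖}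

section ASeminorm

omit [CompleteSpace H]

variable {A T : H →L[ℂ] H}

lemma aNorm_nonneg (x : H) : 0 ≤ aNorm A x := Real.sqrt_nonneg _

lemma aNorm_sq (hA : A.IsPositive) (x : H) : aNorm A x ^ 2 = (⟪A x, x⟫_ℂ).re :=
  Real.sq_sqrt (hA.re_inner_nonneg_left x)

lemma aNorm_neg (x : H) : aNorm A (-x) = aNorm A x := by
  simp [aNorm]

lemma aNorm_le_sqrt_norm_mul_norm (x : H) : aNorm A x ≤ √‖A‖ * ‖x‖ := by
  rw [aNorm, ← Real.sqrt_sq (norm_nonneg x), ← Real.sqrt_mul (norm_nonneg _)]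
  refine Real.sqrt_le_sqrt ?_
  calc (⟪A x, x⟫_ℂ).re ≤ ‖A x‖ * ‖x‖ := (Complex.re_le_norm _).trans (norm_inner_le_norm _ _)
    _ ≤ ‖A‖ * ‖x‖ * ‖x‖ := by gcongr; exact A.le_opNorm x
    _ = ‖A‖ * ‖x‖ ^ 2 := by ring

lemma aNorm_eq_of_apply_eq (hA : (A : H →ₗ[ℂ] H).IsSymmetric) {x y : H} (h : A x = A y) :
    aNorm A x = aNorm A y := by
  have hA' : ∀ u v, ⟪A u, v⟫_ℂ = ⟪u, A v⟫_ℂ := hA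
  rw [aNorm, aNorm, h, hA', h, ← hA']

lemma closure_range_eq_topologicalClosure :
    closure (Set.range A) = (A.range.topologicalClosure : Set H) := by
  rw [Submodule.topologicalClosure_coe]; rfl

lemma aOpNorm_le_of_forall {M : ℝ} (hM : 0 ≤ M) (h : ∀ x, aNorm A (T x) ≤ M * aNorm A x) :
    aOpNorm A T ≤ M :=
  Real.sSup_le (by rintro _ ⟨x, -, hx, rfl⟩; simpa [hx] using h x) hM

lemma aOpNorm_nonneg (T : H →L[ℂ] H) : 0 ≤ aOpNorm A T :=
  Real.sSup_nonneg (by rintro _ ⟨x, -, -, rfl⟩; exact aNorm_nonneg _)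

lemma aOpNorm_neg (T : H →L[ℂ] H) : aOpNorm A (-T) = aOpNorm A T := by
  simp only [aOpNorm, neg_apply, aNorm_neg]

end ASeminorm

section PositiveOperator

variable {A : H →L[ℂ] H}

lemma ContinuousLinearMap.IsPositive.exists_eq_adjoint_comp_self (hA : A.IsPositive) :
    ∃ B : H →L[ℂ] H, A = adjoint B ∘L B := by
  obtain ⟨B, hB⟩ := CStarAlgebra.nonneg_iff_eq_star_mul_self.1 ((nonneg_iff_isPositive A).2 hA)
  exact ⟨B, hB⟩

lemma aNorm_adjoint_comp_self (B : H →L[ℂ] H) (x : H) : aNorm (adjoint B ∘L B) x = ‖B x‖ := by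
  rw [aNorm, comp_apply, adjoint_inner_left, inner_self_eq_norm_sq_to_K]
  norm_cast
  exact Real.sqrt_sq (norm_nonneg _)

lemma aNorm_add_le (hA : A.IsPositive) (x y : H) : aNorm A (x + y) ≤ aNorm A x + aNorm A y := by
  obtain ⟨B, rfl⟩ := hA.exists_eq_adjoint_comp_self
  simp only [aNorm_adjoint_comp_self, map_add]
  exact norm_add_le _ _

lemma aNorm_smul (hA : A.IsPositive) (c : ℂ) (x : H) : aNorm A (c • x) = ‖c‖ * aNorm A x := by
  obtain ⟨B, rfl⟩ := hA.exists_eq_adjoint_comp_self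
  simp only [aNorm_adjoint_comp_self, map_smul, norm_smul]

lemma re_inner_le_aNorm_mul_aNorm (hA : A.IsPositive) (x y : H) :
    (⟪A x, y⟫_ℂ).re ≤ aNorm A x * aNorm A y := by
  obtain ⟨B, rfl⟩ := hA.exists_eq_adjoint_comp_self
  simp only [aNorm_adjoint_comp_self, comp_apply, adjoint_inner_left]
  exact (Complex.re_le_norm _).trans (norm_inner_le_norm _ _)

lemma exists_mem_closure_range_apply_eq (hA : IsSelfAdjoint A) (y : H) :
    ∃ y₁ ∈ closure (Set.range A), A y₁ = A y := by
  set K := A.range.topologicalClosure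
  refine ⟨K.starProjection y, ?_, ?_⟩
  · rw [closure_range_eq_topologicalClosure]
    exact K.starProjection_apply_mem y
  have h := K.sub_starProjection_mem_orthogonal y
  rw [Submodule.orthogonal_closure, orthogonal_range, hA.adjoint_eq, LinearMap.mem_ker,
    map_sub, sub_eq_zero] at h
  exact h.symm

end PositiveOperator

def IsAAdjoint (A T S : H →L[ℂ] H) : Prop :=
  A ∘L S = adjoint T ∘L A

namespace IsAAdjoint

variable {A T S T' S' : H →L[ℂ] H}

lemma apply (h : IsAAdjoint A T S) (x : H) : A (S x) = adjoint T (A x) :=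
  congr($h x)

lemma inner_apply (h : IsAAdjoint A T S) (x y : H) : ⟪A (S x), y⟫_ℂ = ⟪A x, T y⟫_ℂ := by
  rw [h.apply, adjoint_inner_left]

lemma symm (hA : IsSelfAdjoint A) (h : IsAAdjoint A T S) : IsAAdjoint A S T := by
  have := congr(adjoint $h)
  rwa [adjoint_comp, adjoint_comp, adjoint_adjoint, hA.adjoint_eq, eq_comm] at this

lemma add (h : IsAAdjoint A T S) (h' : IsAAdjoint A T' S') : IsAAdjoint A (T + T') (S + S') := by
  rw [IsAAdjoint, comp_add, h, h', map_add, add_comp]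

lemma neg (h : IsAAdjoint A T S) : IsAAdjoint A (-T) (-S) := by
  rw [IsAAdjoint, comp_neg, h, map_neg, neg_comp]

lemma comp (h : IsAAdjoint A T S) (h' : IsAAdjoint A T' S') :
    IsAAdjoint A (T' ∘L T) (S ∘L S') := by
  rw [IsAAdjoint, ← comp_assoc, h, comp_assoc, h', adjoint_comp, comp_assoc]

end IsAAdjoint

lemma le_of_forall_pow_two_pow_le_mul {r s C : ℝ} (hs : 0 ≤ s)
    (h : ∀ n : ℕ, r ^ 2 ^ n ≤ C * s ^ 2 ^ n) : r ≤ s := by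
  by_contra! hsr
  rcases hs.eq_or_lt with rfl | hs
  · have := h 0
    simp only [pow_zero, pow_one, mul_zero] at this
    linarith
  obtain ⟨n, hn⟩ := pow_unbounded_of_one_lt C ((one_lt_div hs).2 hsr)
  have h2n : (r / s) ^ n ≤ (r / s) ^ 2 ^ n :=
    pow_le_pow_right₀ ((one_lt_div hs).2 hsr).le n.lt_two_pow_self.le
  have := (div_le_iff₀ (pow_pos hs _)).2 (h n)
  rw [← div_pow] at this
  linarith

section AOpNorm

variable {A R T S : H →L[ℂ] H}

lemma IsAAdjoint.aNorm_apply_sq_le (hA : A.IsPositive) (hR : IsAAdjoint A R R) (x : H) :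
    aNorm A (R x) ^ 2 ≤ aNorm A x * aNorm A (R (R x)) := by
  rw [aNorm_sq hA, hR.inner_apply]
  exact re_inner_le_aNorm_mul_aNorm hA _ _

lemma IsAAdjoint.aNorm_apply_le_norm_mul (hA : A.IsPositive) (hR : IsAAdjoint A R R) (x : H) :
    aNorm A (R x) ≤ ‖R‖ * aNorm A x := by
  rcases (aNorm_nonneg (A := A) x).eq_or_lt with hx | hx
  · have := hR.aNorm_apply_sq_le hA x
    rw [← hx, zero_mul] at this
    rw [← hx, mul_zero]
    exact (pow_eq_zero_iff two_ne_zero |>.1 (this.antisymm (sq_nonneg _))).le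
  set b := aNorm A x
  -- Squaring `R` at each step, so the induction runs over all `A`-selfadjoint `R` at once.
  have key : ∀ n : ℕ, ∀ R : H →L[ℂ] H, IsAAdjoint A R R →
      (aNorm A (R x) / b) ^ 2 ^ n ≤ (√‖A‖ * ‖x‖ / b) * ‖R‖ ^ 2 ^ n := by
    intro n
    induction n with
    | zero =>
      intro R _
      rw [pow_zero, pow_one, pow_one, div_mul_eq_mul_div]
      gcongr
      calc aNorm A (R x) ≤ √‖A‖ * ‖R x‖ := aNorm_le_sqrt_norm_mul_norm _
        _ ≤ √‖A‖ * (‖R‖ * ‖x‖) := by gcongr; exact R.le_opNorm x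
        _ = √‖A‖ * ‖x‖ * ‖R‖ := by ring
    | succ n ih =>
      intro R hR
      have hsq : (aNorm A (R x) / b) ^ 2 ≤ aNorm A ((R ∘L R) x) / b := by
        rw [div_pow, div_le_div_iff₀ (by positivity) hx, sq b, ← mul_assoc]
        gcongr
        exact hR.aNorm_apply_sq_le hA x |>.trans_eq (mul_comm _ _)
      calc (aNorm A (R x) / b) ^ 2 ^ (n + 1) = ((aNorm A (R x) / b) ^ 2) ^ 2 ^ n := by
            rw [pow_succ', pow_mul]
        _ ≤ (aNorm A ((R ∘L R) x) / b) ^ 2 ^ n := by gcongr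
        _ ≤ (√‖A‖ * ‖x‖ / b) * ‖R ∘L R‖ ^ 2 ^ n := ih _ (hR.comp hR)
        _ ≤ (√‖A‖ * ‖x‖ / b) * (‖R‖ ^ 2) ^ 2 ^ n := by
            gcongr
            exact (opNorm_comp_le R R).trans_eq (sq _).symm
        _ = (√‖A‖ * ‖x‖ / b) * ‖R‖ ^ 2 ^ (n + 1) := by rw [← pow_mul, ← pow_succ']
  rw [← div_le_iff₀ hx]
  exact le_of_forall_pow_two_pow_le_mul (norm_nonneg R) (key · R hR)

lemma IsAAdjoint.aNorm_apply_le_sqrt_norm_mul (hA : A.IsPositive) (h : IsAAdjoint A T S) (x : H) :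
    aNorm A (T x) ≤ √‖S ∘L T‖ * aNorm A x := by
  have hST : IsAAdjoint A (S ∘L T) (S ∘L T) := h.comp (h.symm hA.isSelfAdjoint)
  refine (pow_le_pow_iff_left₀ (aNorm_nonneg _) (mul_nonneg (Real.sqrt_nonneg _) (aNorm_nonneg x))
    two_ne_zero).1 ?_
  calc aNorm A (T x) ^ 2 = (⟪A x, S (T x)⟫_ℂ).re := by
        rw [aNorm_sq hA, (h.symm hA.isSelfAdjoint).inner_apply]
    _ ≤ aNorm A x * aNorm A ((S ∘L T) x) := re_inner_le_aNorm_mul_aNorm hA _ _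
    _ ≤ aNorm A x * (‖S ∘L T‖ * aNorm A x) := by
        gcongr
        · exact aNorm_nonneg x
        · exact hST.aNorm_apply_le_norm_mul hA x
    _ = (√‖S ∘L T‖ * aNorm A x) ^ 2 := by
        rw [mul_pow, Real.sq_sqrt (norm_nonneg _)]
        ring

lemma IsAAdjoint.aNorm_apply_le_aOpNorm_mul (hA : A.IsPositive) (h : IsAAdjoint A T S)
    (y : H) : aNorm A (T y) ≤ aOpNorm A T * aNorm A y := by
  -- Both sides only see `A y` and `A (T y)`, so `y` may be moved into `closure (range A)`.
  obtain ⟨y₁, hy₁, hAy⟩ := exists_mem_closure_range_apply_eq hA.isSelfAdjoint y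
  have hATy : A (T y₁) = A (T y) := by
    rw [(h.symm hA.isSelfAdjoint).apply, hAy, ← (h.symm hA.isSelfAdjoint).apply]
  rw [← aNorm_eq_of_apply_eq hA.isSymmetric hATy, ← aNorm_eq_of_apply_eq hA.isSymmetric hAy]
  rcases (aNorm_nonneg (A := A) y₁).eq_or_lt with h0 | hpos
  · simpa [← h0] using h.aNorm_apply_le_sqrt_norm_mul hA y₁
  set t := aNorm A y₁
  have hbdd : BddAbove {r : ℝ | ∃ x : H, x ∈ closure (Set.range (⇑A)) ∧ aNorm A x = 1 ∧
      r = aNorm A (T x)} :=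
    ⟨√‖S ∘L T‖, by rintro _ ⟨z, -, hz, rfl⟩; simpa [hz] using h.aNorm_apply_le_sqrt_norm_mul hA z⟩
  have hnorm : ‖((t : ℂ))⁻¹‖ = t⁻¹ := by simp [hpos.le]
  have hmem : t⁻¹ * aNorm A (T y₁) ≤ aOpNorm A T := by
    refine le_csSup hbdd ⟨(t : ℂ)⁻¹ • y₁, ?_, ?_, ?_⟩
    · rw [closure_range_eq_topologicalClosure] at hy₁ ⊢
      exact Submodule.smul_mem _ _ hy₁
    · rw [aNorm_smul hA, hnorm, inv_mul_cancel₀ hpos.ne']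
    · rw [map_smul, aNorm_smul hA, hnorm]
  rwa [inv_mul_le_iff₀ hpos, mul_comm] at hmem

lemma IsAAdjoint.aNorm_adjoint_apply_le_aOpNorm_mul (hA : A.IsPositive) (h : IsAAdjoint A T S)
    (x : H) : aNorm A (S x) ≤ aOpNorm A T * aNorm A x := by
  rcases (aNorm_nonneg (A := A) (S x)).eq_or_lt with h0 | hpos
  · rw [← h0]
    exact mul_nonneg (aOpNorm_nonneg T) (aNorm_nonneg x)
  refine le_of_mul_le_mul_right ?_ hpos
  calc aNorm A (S x) * aNorm A (S x) = (⟪A x, T (S x)⟫_ℂ).re := by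
        rw [← sq, aNorm_sq hA, h.inner_apply]
    _ ≤ aNorm A x * aNorm A (T (S x)) := re_inner_le_aNorm_mul_aNorm hA _ _
    _ ≤ aNorm A x * (aOpNorm A T * aNorm A (S x)) := by
        gcongr
        · exact aNorm_nonneg x
        · exact h.aNorm_apply_le_aOpNorm_mul hA _
    _ = aOpNorm A T * aNorm A x * aNorm A (S x) := by ring

lemma IsAAdjoint.aOpNorm_adjoint_comp_le (hA : A.IsPositive) (h : IsAAdjoint A T S) :
    aOpNorm A (S ∘L T) ≤ aOpNorm A T ^ 2 := by
  refine aOpNorm_le_of_forall (sq_nonneg _) fun x => ?_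
  calc aNorm A (S (T x)) ≤ aOpNorm A T * aNorm A (T x) := h.aNorm_adjoint_apply_le_aOpNorm_mul hA _
    _ ≤ aOpNorm A T * (aOpNorm A T * aNorm A x) := by
        gcongr
        · exact aOpNorm_nonneg T
        · exact h.aNorm_apply_le_aOpNorm_mul hA x
    _ = aOpNorm A T ^ 2 * aNorm A x := by ring

lemma IsAAdjoint.aOpNorm_comp_adjoint_le (hA : A.IsPositive) (h : IsAAdjoint A T S) :
    aOpNorm A (T ∘L S) ≤ aOpNorm A T ^ 2 := by
  refine aOpNorm_le_of_forall (sq_nonneg _) fun x => ?_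
  calc aNorm A (T (S x)) ≤ aOpNorm A T * aNorm A (S x) := h.aNorm_apply_le_aOpNorm_mul hA _
    _ ≤ aOpNorm A T * (aOpNorm A T * aNorm A x) := by
        gcongr
        · exact aOpNorm_nonneg T
        · exact h.aNorm_adjoint_apply_le_aOpNorm_mul hA x
    _ = aOpNorm A T ^ 2 * aNorm A x := by ring

lemma aOpNorm_add_le (hA : A.IsPositive) {T' S' : H →L[ℂ] H} (h : IsAAdjoint A T S)
    (h' : IsAAdjoint A T' S') : aOpNorm A (T + T') ≤ aOpNorm A T + aOpNorm A T' := by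
  refine aOpNorm_le_of_forall (add_nonneg (aOpNorm_nonneg T) (aOpNorm_nonneg T')) fun x => ?_
  rw [add_mul]
  exact (aNorm_add_le hA _ _).trans
    (add_le_add (h.aNorm_apply_le_aOpNorm_mul hA x) (h'.aNorm_apply_le_aOpNorm_mul hA x))

lemma sub_aOpNorm_le_aOpNorm_add (hA : A.IsPositive) {T' S' : H →L[ℂ] H} (h : IsAAdjoint A T S)
    (h' : IsAAdjoint A T' S') : aOpNorm A T - aOpNorm A T' ≤ aOpNorm A (T + T') := by
  have := aOpNorm_add_le hA (h.add h') h'.neg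
  rw [add_neg_cancel_right, aOpNorm_neg] at this
  linarith

end AOpNorm

section CrossTerms

variable {A T1 T2 S1 S2 : H →L[ℂ] H}

lemma sub_le_aOpNorm_add_sq_of_adjoint_comp (hA : A.IsPositive) (h1 : IsAAdjoint A T1 S1)
    (h2 : IsAAdjoint A T2 S2) :
    aOpNorm A (S1 ∘L T1 + S2 ∘L T2) - aOpNorm A (S1 ∘L T2 + S2 ∘L T1) ≤
      aOpNorm A (T1 + T2) ^ 2 := by
  have hA' := hA.isSelfAdjoint
  calc _ ≤ aOpNorm A ((S1 ∘L T1 + S2 ∘L T2) + (S1 ∘L T2 + S2 ∘L T1)) :=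
        sub_aOpNorm_le_aOpNorm_add hA ((h1.comp (h1.symm hA')).add (h2.comp (h2.symm hA')))
          ((h2.comp (h1.symm hA')).add (h1.comp (h2.symm hA')))
    _ = aOpNorm A ((S1 + S2) ∘L (T1 + T2)) := by
        rw [add_comp, comp_add, comp_add]
        abel_nf
    _ ≤ _ := (h1.add h2).aOpNorm_adjoint_comp_le hA

lemma sub_le_aOpNorm_add_sq_of_comp_adjoint (hA : A.IsPositive) (h1 : IsAAdjoint A T1 S1)
    (h2 : IsAAdjoint A T2 S2) :
    aOpNorm A (T1 ∘L S1 + T2 ∘L S2) - aOpNorm A (T1 ∘L S2 + T2 ∘L S1) ≤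
      aOpNorm A (T1 + T2) ^ 2 := by
  have hA' := hA.isSelfAdjoint
  calc _ ≤ aOpNorm A ((T1 ∘L S1 + T2 ∘L S2) + (T1 ∘L S2 + T2 ∘L S1)) :=
        sub_aOpNorm_le_aOpNorm_add hA (((h1.symm hA').comp h1).add ((h2.symm hA').comp h2))
          (((h2.symm hA').comp h1).add ((h1.symm hA').comp h2))
    _ = aOpNorm A ((T1 + T2) ∘L (S1 + S2)) := by
        rw [add_comp, comp_add, comp_add]
        abel_nf
    _ ≤ _ := (h1.add h2).aOpNorm_comp_adjoint_le hA

end CrossTerms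

theorem stmt9_general (A T1 T2 S1 S2 : H →L[ℂ] H) (hA : A.IsPositive)
    (hS1 : A ∘L S1 = (ContinuousLinearMap.adjoint T1) ∘L A)
    (hS2 : A ∘L S2 = (ContinuousLinearMap.adjoint T2) ∘L A) :
    min ((aOpNorm A (T1 + T2)) ^ 2) ((aOpNorm A (T1 - T2)) ^ 2) ≥
      max (aOpNorm A (S1 ∘L T1 + S2 ∘L T2) - aOpNorm A (S1 ∘L T2 + S2 ∘L T1))
          (aOpNorm A (T1 ∘L S1 + T2 ∘L S2) - aOpNorm A (T1 ∘L S2 + T2 ∘L S1)) := by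
  have h1 : IsAAdjoint A T1 S1 := hS1
  have h2 : IsAAdjoint A T2 S2 := hS2
  have hsub := sub_le_aOpNorm_add_sq_of_adjoint_comp hA h1 h2.neg
  have hsub' := sub_le_aOpNorm_add_sq_of_comp_adjoint hA h1 h2.neg
  simp only [neg_comp, comp_neg, neg_neg, ← sub_eq_add_neg, ← neg_add', aOpNorm_neg] at hsub hsub'
  exact max_le (le_min (sub_le_aOpNorm_add_sq_of_adjoint_comp hA h1 h2) hsub)
    (le_min (sub_le_aOpNorm_add_sq_of_comp_adjoint hA h1 h2) hsub')

theorem stmt9 (A T1 T2 S1 S2 : H →L[ℂ] H) (hA : A.IsPositive)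
    (hS1 : A ∘L S1 = (ContinuousLinearMap.adjoint T1) ∘L A)
    (hS1r : Set.range (⇑S1) ⊆ closure (Set.range (⇑A)))
    (hS2 : A ∘L S2 = (ContinuousLinearMap.adjoint T2) ∘L A)
    (hS2r : Set.range (⇑S2) ⊆ closure (Set.range (⇑A))) :
    min ((aOpNorm A (T1 + T2)) ^ 2) ((aOpNorm A (T1 - T2)) ^ 2) ≥
      max (aOpNorm A (S1 ∘L T1 + S2 ∘L T2) - aOpNorm A (S1 ∘L T2 + S2 ∘L T1))
          (aOpNorm A (T1 ∘L S1 + T2 ∘L S2) - aOpNorm A (T1 ∘L S2 + T2 ∘L S1)) :=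
  stmt9_general A T1 T2 S1 S2 hA hS1 hS2
end

section
/- Let A be strictly positive and let T1, T2 be bounded linear operators on H each admitting an A-adjoint (i.e. for each i there exists S_i with A∘S_i = T_i*∘A). Then w_B([[T1,T2],[0,0]]) ≥ (1/2)·max{w_A(T1+T2), w_A(T1-T2), w_A(T1+iT2), w_A(T1-iT2)}. -/
/-!
Putting `z = (x, c • x) / √2` with `‖c‖ = 1` into the quadratic form of `[[T₁, T₂], [0, 0]]` gives
half of `⟪A ((T₁ + c • T₂) x), x⟫`, so `w_A(T₁ + c • T₂) ≤ 2 w_B`; then take `c = ±1, ±i`.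

The analytic point is that the supremum defining `w_B` is finite. If `S` is an `A`-adjoint of `T`,
then `P = S T` is symmetric for `⟪A ·, ·⟫`, so `n ↦ ‖Pⁿ x‖_A` is log-convex and grows at most like
`‖P‖ⁿ`, which forces `‖P x‖_A ≤ ‖P‖ ‖x‖_A`; hence `‖T x‖_A² = ⟪A (P x), x⟫ ≤ ‖P‖ ‖x‖_A²`.
Throughout, `‖x‖_A` is written as `‖A^{1/2} x‖` (`CFC.sqrt A`), so Cauchy–Schwarz for `⟪A ·, ·⟫`
is the usual one.
-/

open scoped InnerProductSpace
open ContinuousLinearMap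

variable {H : Type*} [NormedAddCommGroup H] [InnerProductSpace ℂ H] [CompleteSpace H]

section LogConvex

variable {b : ℕ → ℝ}

theorem mul_le_mul_succ_of_sq_le (hb : ∀ n, 0 ≤ b n) (hrec : ∀ n, b (n + 1) ^ 2 ≤ b (n + 2) * b n)
    (k : ℕ) : b 1 * b k ≤ b 0 * b (k + 1) := by
  induction k with
  | zero => rw [mul_comm]
  | succ k ih =>
    rcases (hb (k + 1)).eq_or_lt with h0 | hpos
    · rw [← h0, mul_zero]
      exact mul_nonneg (hb 0) (hb (k + 2))
    · refine le_of_mul_le_mul_right ?_ hpos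
      calc b 1 * b (k + 1) * b (k + 1) = b 1 * b (k + 1) ^ 2 := by ring
        _ ≤ b 1 * (b (k + 2) * b k) := mul_le_mul_of_nonneg_left (hrec k) (hb 1)
        _ = b (k + 2) * (b 1 * b k) := by ring
        _ ≤ b (k + 2) * (b 0 * b (k + 1)) := mul_le_mul_of_nonneg_left ih (hb (k + 2))
        _ = b 0 * b (k + 2) * b (k + 1) := by ring

theorem pow_le_mul_pow_of_sq_le (hb : ∀ n, 0 ≤ b n) (hrec : ∀ n, b (n + 1) ^ 2 ≤ b (n + 2) * b n)
    (n : ℕ) : b 1 ^ (n + 1) ≤ b (n + 1) * b 0 ^ n := by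
  induction n with
  | zero => simp
  | succ n ih =>
    calc b 1 ^ (n + 2) = b 1 * b 1 ^ (n + 1) := by ring
      _ ≤ b 1 * (b (n + 1) * b 0 ^ n) := mul_le_mul_of_nonneg_left ih (hb 1)
      _ = b 1 * b (n + 1) * b 0 ^ n := by ring
      _ ≤ b 0 * b (n + 2) * b 0 ^ n :=
        mul_le_mul_of_nonneg_right (mul_le_mul_succ_of_sq_le hb hrec (n + 1))
          (pow_nonneg (hb 0) n)
      _ = b (n + 2) * b 0 ^ (n + 1) := by ring

theorem le_mul_of_sq_le_of_le_geom (hb : ∀ n, 0 ≤ b n) (hrec : ∀ n, b (n + 1) ^ 2 ≤ b (n + 2) * b n)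
    {C K : ℝ} (hK : 0 ≤ K) (hgrow : ∀ n, b n ≤ C * K ^ n) :
    b 1 ≤ K * b 0 := by
  by_contra! hlt
  have hb1 : 0 < b 1 := (mul_nonneg hK (hb 0)).trans_lt hlt
  have hb0 : 0 < b 0 := by
    by_contra! h0
    nlinarith [hrec 0, hb 0, hb 2, mul_nonpos_of_nonneg_of_nonpos (hb 2) h0]
  set r := K * b 0 / b 1
  have hr : r < 1 := (div_lt_one hb1).2 hlt
  have hbound : ∀ n, 1 ≤ C / b 0 * r ^ (n + 1) := by
    intro n
    have := (pow_le_mul_pow_of_sq_le hb hrec n).trans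
      (mul_le_mul_of_nonneg_right (hgrow (n + 1)) (pow_nonneg (hb 0) n))
    rw [div_pow, ← mul_div_assoc, le_div_iff₀ (by positivity), mul_pow]
    calc 1 * b 1 ^ (n + 1) ≤ C * K ^ (n + 1) * b 0 ^ n := by rwa [one_mul]
      _ = C / b 0 * (K ^ (n + 1) * b 0 ^ (n + 1)) := by field_simp; ring
  have hlim : Filter.Tendsto (fun n => C / b 0 * r ^ (n + 1)) Filter.atTop (nhds 0) := by
    simpa using ((tendsto_pow_atTop_nhds_zero_of_lt_one (by positivity) hr).comp
      (Filter.tendsto_add_atTop_nat 1)).const_mul (C / b 0)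
  linarith [ge_of_tendsto' hlim hbound]

end LogConvex

section Symmetric

variable {𝕜 E F : Type*} [RCLike 𝕜] [NormedAddCommGroup E] [NormedSpace 𝕜 E]
  [NormedAddCommGroup F] [InnerProductSpace 𝕜 F] {R : E →L[𝕜] F} {P : E →L[𝕜] E}

theorem norm_apply_sq_le_of_inner_symm (hP : ∀ u v, ⟪R (P u), R v⟫_𝕜 = ⟪R u, R (P v)⟫_𝕜)
    (u : E) : ‖R (P u)‖ ^ 2 ≤ ‖R (P (P u))‖ * ‖R u‖ := by
  calc ‖R (P u)‖ ^ 2 = RCLike.re ⟪R (P (P u)), R u⟫_𝕜 := by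
        rw [norm_sq_eq_re_inner (𝕜 := 𝕜), hP, inner_re_symm]
    _ ≤ ‖⟪R (P (P u)), R u⟫_𝕜‖ := RCLike.re_le_norm _
    _ ≤ ‖R (P (P u))‖ * ‖R u‖ := norm_inner_le_norm _ _

theorem norm_apply_le_opNorm_mul_of_inner_symm
    (hP : ∀ u v, ⟪R (P u), R v⟫_𝕜 = ⟪R u, R (P v)⟫_𝕜) (x : E) : ‖R (P x)‖ ≤ ‖P‖ * ‖R x‖ := by
  have hiter : ∀ n, ‖P^[n] x‖ ≤ ‖P‖ ^ n * ‖x‖ := by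
    intro n
    induction n with
    | zero => simp
    | succ n ih =>
      rw [Function.iterate_succ_apply', pow_succ', mul_assoc]
      exact P.le_of_opNorm_le_of_le le_rfl ih
  refine le_mul_of_sq_le_of_le_geom (b := fun n => ‖R (P^[n] x)‖) (fun n => norm_nonneg _)
    (fun n => ?_) (C := ‖R‖ * ‖x‖) (norm_nonneg P) (fun n => ?_)
  · simp only [Function.iterate_succ_apply']
    exact norm_apply_sq_le_of_inner_symm hP _
  · calc ‖R (P^[n] x)‖ ≤ ‖R‖ * (‖P‖ ^ n * ‖x‖) := R.le_of_opNorm_le_of_le le_rfl (hiter n)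
      _ = ‖R‖ * ‖x‖ * ‖P‖ ^ n := by ring

end Symmetric

section Positive

variable {A : H →L[ℂ] H}

theorem inner_eq_inner_sqrt (hA : A.IsPositive) (u v : H) :
    ⟪A u, v⟫_ℂ = ⟪CFC.sqrt A u, CFC.sqrt A v⟫_ℂ := by
  have hR : IsSelfAdjoint (CFC.sqrt A) :=
    ((nonneg_iff_isPositive _).1 (CFC.sqrt_nonneg A)).isSelfAdjoint
  rw [← adjoint_inner_left, hR.adjoint_eq, ← mul_apply_eq_comp,
    CFC.sqrt_mul_sqrt_self A ((nonneg_iff_isPositive A).2 hA)]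

theorem re_inner_self_eq_norm_sqrt_sq (hA : A.IsPositive) (u : H) :
    (⟪A u, u⟫_ℂ).re = ‖CFC.sqrt A u‖ ^ 2 := by
  rw [inner_eq_inner_sqrt hA, norm_sq_eq_re_inner (𝕜 := ℂ)]
  rfl

theorem norm_inner_le_norm_sqrt_mul (hA : A.IsPositive) (u v : H) :
    ‖⟪A u, v⟫_ℂ‖ ≤ ‖CFC.sqrt A u‖ * ‖CFC.sqrt A v‖ := by
  rw [inner_eq_inner_sqrt hA]
  exact norm_inner_le_norm _ _

variable {T S : H →L[ℂ] H}

theorem inner_sqrt_comp_apply (hA : A.IsPositive) (hS : A ∘L S = adjoint T ∘L A) (u v : H) :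
    ⟪CFC.sqrt A ((S ∘L T) u), CFC.sqrt A v⟫_ℂ = ⟪CFC.sqrt A (T u), CFC.sqrt A (T v)⟫_ℂ := by
  rw [← inner_eq_inner_sqrt hA, ← inner_eq_inner_sqrt hA, comp_apply, ← comp_apply A S, hS,
    comp_apply, adjoint_inner_left]

theorem norm_sqrt_apply_le_of_comp_eq_adjoint_comp (hA : A.IsPositive)
    (hS : A ∘L S = adjoint T ∘L A) (x : H) :
    ‖CFC.sqrt A (T x)‖ ≤ √‖S ∘L T‖ * ‖CFC.sqrt A x‖ := by
  have hsymm : ∀ u v, ⟪CFC.sqrt A ((S ∘L T) u), CFC.sqrt A v⟫_ℂ =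
      ⟪CFC.sqrt A u, CFC.sqrt A ((S ∘L T) v)⟫_ℂ := fun u v => by
    rw [inner_sqrt_comp_apply hA hS, ← inner_conj_symm (CFC.sqrt A u),
      inner_sqrt_comp_apply hA hS, inner_conj_symm]
  refine (pow_le_pow_iff_left₀ (norm_nonneg _) (by positivity) two_ne_zero).1 ?_
  calc ‖CFC.sqrt A (T x)‖ ^ 2 = (⟪CFC.sqrt A ((S ∘L T) x), CFC.sqrt A x⟫_ℂ).re := by
        rw [inner_sqrt_comp_apply hA hS, norm_sq_eq_re_inner (𝕜 := ℂ)]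
        rfl
    _ ≤ ‖CFC.sqrt A ((S ∘L T) x)‖ * ‖CFC.sqrt A x‖ :=
        (Complex.re_le_norm _).trans (norm_inner_le_norm _ _)
    _ ≤ ‖S ∘L T‖ * ‖CFC.sqrt A x‖ * ‖CFC.sqrt A x‖ := by
        gcongr
        exact norm_apply_le_opNorm_mul_of_inner_symm hsymm x
    _ = (√‖S ∘L T‖ * ‖CFC.sqrt A x‖) ^ 2 := by
        rw [mul_pow, Real.sq_sqrt (norm_nonneg _)]
        ring

theorem norm_inner_add_le_of_norm_sqrt_le (hA : A.IsPositive) {T₁ T₂ : H →L[ℂ] H} {K₁ K₂ : ℝ}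
    (hK₁ : 0 ≤ K₁) (hK₂ : 0 ≤ K₂) (hT₁ : ∀ x, ‖CFC.sqrt A (T₁ x)‖ ≤ K₁ * ‖CFC.sqrt A x‖)
    (hT₂ : ∀ x, ‖CFC.sqrt A (T₂ x)‖ ≤ K₂ * ‖CFC.sqrt A x‖) {x y : H}
    (hx : ‖CFC.sqrt A x‖ ≤ 1) (hy : ‖CFC.sqrt A y‖ ≤ 1) :
    ‖⟪A (T₁ x + T₂ y), x⟫_ℂ‖ ≤ K₁ + K₂ := by
  calc ‖⟪A (T₁ x + T₂ y), x⟫_ℂ‖ ≤ ‖⟪A (T₁ x), x⟫_ℂ‖ + ‖⟪A (T₂ y), x⟫_ℂ‖ := by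
        rw [map_add, inner_add_left]
        exact norm_add_le _ _
    _ ≤ ‖CFC.sqrt A (T₁ x)‖ * ‖CFC.sqrt A x‖ + ‖CFC.sqrt A (T₂ y)‖ * ‖CFC.sqrt A x‖ :=
        add_le_add (norm_inner_le_norm_sqrt_mul hA _ _) (norm_inner_le_norm_sqrt_mul hA _ _)
    _ ≤ K₁ * ‖CFC.sqrt A x‖ * ‖CFC.sqrt A x‖ + K₂ * ‖CFC.sqrt A y‖ * ‖CFC.sqrt A x‖ := by
        gcongr
        exacts [hT₁ x, hT₂ y]
    _ ≤ K₁ * 1 * 1 + K₂ * 1 * 1 := by gcongr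
    _ = K₁ + K₂ := by ring

end Positive

section NumericalRadius

variable {A T₁ T₂ : H →L[ℂ] H}

theorem le_wB (hA : A.IsPositive) {M : ℝ}
    (hM : ∀ x y : H, ‖CFC.sqrt A x‖ ^ 2 + ‖CFC.sqrt A y‖ ^ 2 = 1 →
      ‖⟪A (T₁ x + T₂ y), x⟫_ℂ‖ ≤ M)
    {x y : H} (hxy : ‖CFC.sqrt A x‖ ^ 2 + ‖CFC.sqrt A y‖ ^ 2 = 1) :
    ‖⟪A (T₁ x + T₂ y), x⟫_ℂ‖ ≤ wB A T₁ T₂ 0 0 := by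
  have hcond : ∀ x y : H, √((⟪A x, x⟫_ℂ).re + (⟪A y, y⟫_ℂ).re) = 1 ↔
      ‖CFC.sqrt A x‖ ^ 2 + ‖CFC.sqrt A y‖ ^ 2 = 1 := fun x y => by
    rw [re_inner_self_eq_norm_sqrt_sq hA, re_inner_self_eq_norm_sqrt_sq hA, Real.sqrt_eq_one]
  refine le_csSup ⟨M, ?_⟩ ⟨x, y, (hcond x y).2 hxy, by simp⟩
  rintro r ⟨x, y, h, rfl⟩
  simpa using hM x y ((hcond x y).1 h)

theorem wA_add_smul_le_two_mul_wB (hA : A.IsPositive) {M : ℝ}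
    (hM : ∀ x y : H, ‖CFC.sqrt A x‖ ^ 2 + ‖CFC.sqrt A y‖ ^ 2 = 1 →
      ‖⟪A (T₁ x + T₂ y), x⟫_ℂ‖ ≤ M)
    {c : ℂ} (hc : ‖c‖ = 1) : wA A (T₁ + c • T₂) ≤ 2 * wB A T₁ T₂ 0 0 := by
  refine Real.sSup_le ?_ (mul_nonneg zero_le_two (Real.sSup_nonneg ?_))
  · rintro r ⟨x, hx_one, rfl⟩
    have hx : ‖CFC.sqrt A x‖ ^ 2 = 1 := by
      rw [← re_inner_self_eq_norm_sqrt_sq hA, ← Real.sqrt_eq_one]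
      exact hx_one
    set s : ℂ := (((√2)⁻¹ : ℝ) : ℂ)
    have hs : ‖s‖ ^ 2 = 1 / 2 := by
      rw [Complex.norm_real, Real.norm_eq_abs, sq_abs, inv_pow, Real.sq_sqrt zero_le_two,
        one_div]
    have hval : ⟪A (T₁ (s • x) + T₂ ((c * s) • x)), s • x⟫_ℂ =
        (1 / 2 : ℂ) * ⟪A ((T₁ + c • T₂) x), x⟫_ℂ := by
      have hconj : (starRingEnd ℂ) s = s := Complex.conj_ofReal _
      have hss : s * s = 1 / 2 := by
        rw [← Complex.ofReal_mul, ← sq, inv_pow, Real.sq_sqrt zero_le_two]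
        norm_num
      simp only [map_smul, map_add, inner_add_left, inner_smul_left, inner_smul_right, add_apply,
        smul_apply, map_mul, hconj]
      linear_combination (⟪A (T₁ x), x⟫_ℂ + (starRingEnd ℂ) c * ⟪A (T₂ x), x⟫_ℂ) * hss
    have := le_wB hA hM (x := s • x) (y := (c * s) • x) (by
      simp only [map_smul, norm_smul, mul_pow, norm_mul, hc, one_mul, hs, hx]
      norm_num)
    rw [hval, norm_mul, show ‖(1 / 2 : ℂ)‖ = 1 / 2 by norm_num] at this
    linarith
  · rintro r ⟨x, y, -, rfl⟩
    positivity

end NumericalRadius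

theorem stmt13_general (A T1 T2 : H →L[ℂ] H) (hA : A.IsPositive)
    (h1 : ∃ S : H →L[ℂ] H, A ∘L S = (ContinuousLinearMap.adjoint T1) ∘L A)
    (h2 : ∃ S : H →L[ℂ] H, A ∘L S = (ContinuousLinearMap.adjoint T2) ∘L A) :
    wB A T1 T2 0 0 ≥
      (1 / 2) * max (max (wA A (T1 + T2)) (wA A (T1 - T2)))
        (max (wA A (T1 + Complex.I • T2)) (wA A (T1 - Complex.I • T2))) := by
  obtain ⟨S₁, hS₁⟩ := h1
  obtain ⟨S₂, hS₂⟩ := h2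
  have hM : ∀ x y : H, ‖CFC.sqrt A x‖ ^ 2 + ‖CFC.sqrt A y‖ ^ 2 = 1 →
      ‖⟪A (T1 x + T2 y), x⟫_ℂ‖ ≤ √‖S₁ ∘L T1‖ + √‖S₂ ∘L T2‖ := fun x y hxy =>
    norm_inner_add_le_of_norm_sqrt_le hA (Real.sqrt_nonneg _) (Real.sqrt_nonneg _)
      (norm_sqrt_apply_le_of_comp_eq_adjoint_comp hA hS₁)
      (norm_sqrt_apply_le_of_comp_eq_adjoint_comp hA hS₂)
      (by nlinarith [norm_nonneg (CFC.sqrt A x)]) (by nlinarith [norm_nonneg (CFC.sqrt A y)])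
  have key (c : ℂ) (hc : ‖c‖ = 1) := wA_add_smul_le_two_mul_wB hA hM hc
  have hplus := key 1 norm_one
  have hminus := key (-1) (by simp)
  have hI := key Complex.I Complex.norm_I
  have hmI := key (-Complex.I) (by simp)
  simp only [one_smul, neg_smul, ← sub_eq_add_neg] at hplus hminus hI hmI
  rw [ge_iff_le]
  linarith [max_le (max_le hplus hminus) (max_le hI hmI)]

theorem stmt13 (A T1 T2 : H →L[ℂ] H) (hA : A.IsPositive) (hA' : ∀ x : H, x ≠ 0 → 0 < (⟪A x, x⟫_ℂ).re)
    (h1 : ∃ S : H →L[ℂ] H, A ∘L S = (ContinuousLinearMap.adjoint T1) ∘L A)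
    (h2 : ∃ S : H →L[ℂ] H, A ∘L S = (ContinuousLinearMap.adjoint T2) ∘L A) :
    wB A T1 T2 0 0 ≥
      (1 / 2) * max (max (wA A (T1 + T2)) (wA A (T1 - T2)))
        (max (wA A (T1 + Complex.I • T2)) (wA A (T1 - Complex.I • T2))) :=
  stmt13_general A T1 T2 hA h1 h2
end

section
/- Let A be strictly positive and let T1, T2 be bounded linear operators on H each admitting an A-adjoint (i.e. for each i there exists S_i with A∘S_i = T_i*∘A). Then w_B([[0,T1],[T2,0]]) ≤ w_A(T1) + w_A(T2) - (1/2)·|w_A(T1+T2) - w_A(T1-T2)|. -/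
open scoped InnerProductSpace
open ContinuousLinearMap

variable {H : Type*} [NormedAddCommGroup H] [InnerProductSpace ℂ H] [CompleteSpace H]

/-!
Write `A = P²` with `P = √A`, so that `⟨x, y⟩_A = ⟨Px, Py⟩` and `‖x‖_A = ‖Px‖`.

If `T` has an `A`-adjoint `S`, then `R = S T` is `A`-symmetric and `‖PTx‖² = ⟨ARx, x⟩`.
Cauchy–Schwarz gives `|⟨ARᵐx, x⟩|² ≤ |⟨AR²ᵐx, x⟩|` on `A`-unit vectors, and iterating along
`m = 2ⁿ` against the crude bound `‖A‖ ‖x‖² ‖R‖ᵐ` yields `|⟨ARx, x⟩| ≤ ‖R‖`; so `w_A(T)` is a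
genuine supremum.

For `C = T₁ + T₂`, `D = T₁ - T₂`, `u = x + y`, `v = x - y` one has
`4 (⟨AT₁y, x⟩ + ⟨AT₂x, y⟩) = (⟨ACu, u⟩ - ⟨ACv, v⟩) + (⟨ADu, v⟩ - ⟨ADv, u⟩)`, and the last bracket
is `(2i)⁻¹ (⟨AD(u + iv), u + iv⟩ - ⟨AD(u - iv), u - iv⟩)`. The parallelogram law then gives
`w_B ≤ (w_A(C) + w_A(D)) / 2 = max (w_A(C), w_A(D)) - |w_A(C) - w_A(D)| / 2`, and both
`w_A(C)` and `w_A(D)` are at most `w_A(T₁) + w_A(T₂)`.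
-/

theorem le_of_sq_le_apply_two_mul {e : ℕ → ℝ} {M K : ℝ} (hK : 0 ≤ K)
    (hsq : ∀ m, e m ^ 2 ≤ e (2 * m)) (hbound : ∀ m, 0 < m → e m ≤ M * K ^ m) : e 1 ≤ K := by
  by_contra! hlt
  have he1 : 0 < e 1 := hK.trans_lt hlt
  have hpow : ∀ n : ℕ, e 1 ^ 2 ^ n ≤ e (2 ^ n) := by
    intro n
    induction n with
    | zero => simp
    | succ n ih =>
      calc e 1 ^ 2 ^ (n + 1) = (e 1 ^ 2 ^ n) ^ 2 := by rw [pow_succ, pow_mul]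
        _ ≤ e (2 ^ n) ^ 2 := pow_le_pow_left₀ (by positivity) ih 2
        _ ≤ e (2 ^ (n + 1)) := by rw [Nat.pow_succ']; exact hsq _
  rcases hK.eq_or_lt with rfl | hKpos
  · simpa using he1.trans_le (hbound 1 one_pos)
  have hq : 1 < e 1 / K := (one_lt_div hKpos).2 hlt
  obtain ⟨n, hn⟩ := pow_unbounded_of_one_lt M hq
  have hqM : (e 1 / K) ^ 2 ^ n ≤ M := by
    rw [div_pow, div_le_iff₀ (by positivity)]
    exact (hpow n).trans (hbound _ (Nat.two_pow_pos n))
  exact (hn.trans_le (pow_le_pow_right₀ hq.le (Nat.lt_two_pow_self).le)).not_ge hqM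

section

variable {E : Type*} [NormedAddCommGroup E] [InnerProductSpace ℂ E]

theorem wA_nonneg (A T : E →L[ℂ] E) : 0 ≤ wA A T :=
  Real.sSup_nonneg (by rintro _ ⟨x, -, rfl⟩; exact norm_nonneg _)

variable {A : E →L[ℂ] E}

theorem inner_apply_pow_eq_of_symm {R : E →L[ℂ] E} (hR : ∀ x y, ⟪A (R x), y⟫_ℂ = ⟪A x, R y⟫_ℂ)
    (m : ℕ) (x y : E) : ⟪A ((R ^ m) x), y⟫_ℂ = ⟪A x, (R ^ m) y⟫_ℂ := by
  induction m generalizing x y with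
  | zero => rfl
  | succ m ih => rw [pow_succ, mul_apply_eq_comp, ih, hR, ← mul_apply_eq_comp, pow_mul_comm']

theorem wA_le_of_norm_le {T : E →L[ℂ] E} {c : ℝ} (hc : 0 ≤ c)
    (h : ∀ x, aNorm A x = 1 → ‖⟪A (T x), x⟫_ℂ‖ ≤ c) : wA A T ≤ c :=
  Real.sSup_le (by rintro _ ⟨x, hx, rfl⟩; exact h x hx) hc

theorem wA_add_le {T1 T2 : E →L[ℂ] E}
    (hT1 : BddAbove {r : ℝ | ∃ x : E, aNorm A x = 1 ∧ r = ‖⟪A (T1 x), x⟫_ℂ‖})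
    (hT2 : BddAbove {r : ℝ | ∃ x : E, aNorm A x = 1 ∧ r = ‖⟪A (T2 x), x⟫_ℂ‖}) :
    wA A (T1 + T2) ≤ wA A T1 + wA A T2 := by
  refine wA_le_of_norm_le (add_nonneg (wA_nonneg A T1) (wA_nonneg A T2)) fun x hx => ?_
  rw [add_apply, map_add, inner_add_left]
  exact (norm_add_le _ _).trans (add_le_add (le_csSup hT1 ⟨x, hx, rfl⟩) (le_csSup hT2 ⟨x, hx, rfl⟩))

theorem wA_sub_le {T1 T2 : E →L[ℂ] E}
    (hT1 : BddAbove {r : ℝ | ∃ x : E, aNorm A x = 1 ∧ r = ‖⟪A (T1 x), x⟫_ℂ‖})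
    (hT2 : BddAbove {r : ℝ | ∃ x : E, aNorm A x = 1 ∧ r = ‖⟪A (T2 x), x⟫_ℂ‖}) :
    wA A (T1 - T2) ≤ wA A T1 + wA A T2 := by
  refine wA_le_of_norm_le (add_nonneg (wA_nonneg A T1) (wA_nonneg A T2)) fun x hx => ?_
  rw [sub_apply, map_sub, inner_sub_left]
  exact (norm_sub_le _ _).trans (add_le_add (le_csSup hT1 ⟨x, hx, rfl⟩) (le_csSup hT2 ⟨x, hx, rfl⟩))

end

section

variable {A : H →L[ℂ] H}

theorem inner_apply_eq_inner_sqrt (hA : A.IsPositive) (x y : H) :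
    ⟪A x, y⟫_ℂ = ⟪CFC.sqrt A x, CFC.sqrt A y⟫_ℂ := by
  have hA0 : 0 ≤ A := (nonneg_iff_isPositive A).2 hA
  conv_lhs => rw [← CFC.sqrt_mul_sqrt_self A hA0, mul_apply_eq_comp]
  exact (isSelfAdjoint_iff_isSymmetric.1 (IsSelfAdjoint.of_nonneg (CFC.sqrt_nonneg A))) _ _

theorem re_inner_apply_self_eq_norm_sqrt_sq (hA : A.IsPositive) (x : H) :
    (⟪A x, x⟫_ℂ).re = ‖CFC.sqrt A x‖ ^ 2 := by
  rw [inner_apply_eq_inner_sqrt hA]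
  exact inner_self_eq_norm_sq (𝕜 := ℂ) _

theorem aNorm_eq_norm_sqrt (hA : A.IsPositive) (x : H) : aNorm A x = ‖CFC.sqrt A x‖ := by
  rw [aNorm, re_inner_apply_self_eq_norm_sqrt_sq hA, Real.sqrt_sq (norm_nonneg _)]

theorem norm_inner_apply_le (hA : A.IsPositive) (x y : H) :
    ‖⟪A x, y⟫_ℂ‖ ≤ ‖CFC.sqrt A x‖ * ‖CFC.sqrt A y‖ := by
  rw [inner_apply_eq_inner_sqrt hA]
  exact norm_inner_le_norm _ _

theorem norm_inner_apply_self_le_of_symm (hA : A.IsPositive) {R : H →L[ℂ] H}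
    (hR : ∀ x y, ⟪A (R x), y⟫_ℂ = ⟪A x, R y⟫_ℂ) {x : H} (hx : ‖CFC.sqrt A x‖ = 1) :
    ‖⟪A (R x), x⟫_ℂ‖ ≤ ‖R‖ := by
  set e : ℕ → ℝ := fun m => ‖⟪A ((R ^ m) x), x⟫_ℂ‖
  have hsq : ∀ m, e m ^ 2 ≤ e (2 * m) := by
    intro m
    have hle : e m ≤ ‖CFC.sqrt A ((R ^ m) x)‖ := by
      simpa [e, hx] using norm_inner_apply_le hA ((R ^ m) x) x
    calc e m ^ 2 ≤ ‖CFC.sqrt A ((R ^ m) x)‖ ^ 2 := pow_le_pow_left₀ (norm_nonneg _) hle 2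
      _ = (⟪A ((R ^ (2 * m)) x), x⟫_ℂ).re := by
        rw [two_mul, pow_add, mul_apply_eq_comp, inner_apply_pow_eq_of_symm hR,
          re_inner_apply_self_eq_norm_sqrt_sq hA]
      _ ≤ e (2 * m) := Complex.re_le_norm _
  have hbound : ∀ m, 0 < m → e m ≤ ‖A‖ * ‖x‖ ^ 2 * ‖R‖ ^ m := by
    intro m hm
    calc e m ≤ ‖A‖ * (‖R ^ m‖ * ‖x‖) * ‖x‖ := by
          refine (norm_inner_le_norm _ _).trans ?_
          gcongr
          exact (A.le_opNorm _).trans (by gcongr; exact (R ^ m).le_opNorm x)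
      _ ≤ ‖A‖ * (‖R‖ ^ m * ‖x‖) * ‖x‖ := by gcongr; exact norm_pow_le' R hm
      _ = ‖A‖ * ‖x‖ ^ 2 * ‖R‖ ^ m := by ring
  simpa [e] using le_of_sq_le_apply_two_mul (norm_nonneg R) hsq hbound

theorem inner_apply_aAdjoint_apply {T S : H →L[ℂ] H} (hS : A ∘L S = adjoint T ∘L A) (x y : H) :
    ⟪A (S x), y⟫_ℂ = ⟪A x, T y⟫_ℂ := by
  rw [← comp_apply A S, hS, comp_apply, adjoint_inner_left]

open ComplexConjugate in
theorem inner_apply_aAdjoint_comp_symm (hA : A.IsPositive) {T S : H →L[ℂ] H}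
    (hS : A ∘L S = adjoint T ∘L A) (x y : H) :
    ⟪A ((S ∘L T) x), y⟫_ℂ = ⟪A x, (S ∘L T) y⟫_ℂ := by
  calc ⟪A (S (T x)), y⟫_ℂ = ⟪A (T x), T y⟫_ℂ := inner_apply_aAdjoint_apply hS _ _
    _ = conj ⟪A (T y), T x⟫_ℂ := by rw [hA.inner_left_eq_inner_right, inner_conj_symm]
    _ = conj ⟪A (S (T y)), x⟫_ℂ := by rw [inner_apply_aAdjoint_apply hS]
    _ = ⟪A x, S (T y)⟫_ℂ := by rw [hA.inner_left_eq_inner_right, inner_conj_symm]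

theorem bddAbove_of_aAdjoint (hA : A.IsPositive) {T S : H →L[ℂ] H}
    (hS : A ∘L S = adjoint T ∘L A) :
    BddAbove {r : ℝ | ∃ x : H, aNorm A x = 1 ∧ r = ‖⟪A (T x), x⟫_ℂ‖} := by
  refine ⟨√‖S ∘L T‖, ?_⟩
  rintro r ⟨x, hx, rfl⟩
  rw [aNorm_eq_norm_sqrt hA] at hx
  refine Real.le_sqrt_of_sq_le ?_
  calc ‖⟪A (T x), x⟫_ℂ‖ ^ 2 ≤ ‖CFC.sqrt A (T x)‖ ^ 2 := by
        gcongr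
        simpa [hx] using norm_inner_apply_le hA (T x) x
    _ = (⟪A ((S ∘L T) x), x⟫_ℂ).re := by
        rw [comp_apply, inner_apply_aAdjoint_apply hS, re_inner_apply_self_eq_norm_sqrt_sq hA]
    _ ≤ ‖⟪A ((S ∘L T) x), x⟫_ℂ‖ := Complex.re_le_norm _
    _ ≤ ‖S ∘L T‖ := norm_inner_apply_self_le_of_symm hA (inner_apply_aAdjoint_comp_symm hA hS) hx

theorem norm_inner_apply_self_le_wA (hA : A.IsPositive) {T : H →L[ℂ] H}
    (hT : BddAbove {r : ℝ | ∃ x : H, aNorm A x = 1 ∧ r = ‖⟪A (T x), x⟫_ℂ‖}) (x : H) :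
    ‖⟪A (T x), x⟫_ℂ‖ ≤ wA A T * ‖CFC.sqrt A x‖ ^ 2 := by
  rcases (norm_nonneg (CFC.sqrt A x)).eq_or_lt with ht | ht
  · have hx : CFC.sqrt A x = 0 := norm_eq_zero.1 ht.symm
    simp [inner_apply_eq_inner_sqrt hA, hx]
  set t := ‖CFC.sqrt A x‖
  have hunit : aNorm A ((t⁻¹ : ℂ) • x) = 1 := by
    rw [aNorm_eq_norm_sqrt hA, map_smul, norm_smul]
    simp [t, ht.ne']
  have hle : t⁻¹ * (t⁻¹ * ‖⟪A (T x), x⟫_ℂ‖) ≤ wA A T := by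
    have := le_csSup hT ⟨_, hunit, rfl⟩
    rwa [map_smul, map_smul, inner_smul_left, inner_smul_right, norm_mul, norm_mul,
      Complex.norm_conj, norm_inv, Complex.norm_real, Real.norm_of_nonneg ht.le] at this
  calc ‖⟪A (T x), x⟫_ℂ‖ = t⁻¹ * (t⁻¹ * ‖⟪A (T x), x⟫_ℂ‖) * t ^ 2 := by field_simp
    _ ≤ wA A T * t ^ 2 := by gcongr

theorem norm_inner_apply_sub_inner_apply_le_wA (hA : A.IsPositive) {T : H →L[ℂ] H}
    (hT : BddAbove {r : ℝ | ∃ x : H, aNorm A x = 1 ∧ r = ‖⟪A (T x), x⟫_ℂ‖}) (u v : H) :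
    ‖⟪A (T u), v⟫_ℂ - ⟪A (T v), u⟫_ℂ‖ ≤
      wA A T * (‖CFC.sqrt A u‖ ^ 2 + ‖CFC.sqrt A v‖ ^ 2) := by
  set P := CFC.sqrt A
  have hpolar : ⟪A (T (u + Complex.I • v)), u + Complex.I • v⟫_ℂ
      - ⟪A (T (u - Complex.I • v)), u - Complex.I • v⟫_ℂ
      = 2 * Complex.I * (⟪A (T u), v⟫_ℂ - ⟪A (T v), u⟫_ℂ) := by
    simp only [map_add, map_sub, map_smul, inner_add_left, inner_add_right, inner_sub_left,
      inner_sub_right, inner_smul_left, inner_smul_right, Complex.conj_I]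
    ring
  have hpar : ‖P (u + Complex.I • v)‖ ^ 2 + ‖P (u - Complex.I • v)‖ ^ 2
      = 2 * (‖P u‖ ^ 2 + ‖P v‖ ^ 2) := by
    have := parallelogram_law_with_norm ℂ (P u) (Complex.I • P v)
    rw [norm_smul, Complex.norm_I, one_mul] at this
    rw [map_add, map_sub, map_smul]
    linear_combination this
  have hnorm : ‖⟪A (T u), v⟫_ℂ - ⟪A (T v), u⟫_ℂ‖ =
      ‖⟪A (T (u + Complex.I • v)), u + Complex.I • v⟫_ℂ
        - ⟪A (T (u - Complex.I • v)), u - Complex.I • v⟫_ℂ‖ / 2 := by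
    rw [hpolar, norm_mul, norm_mul, Complex.norm_I]
    norm_num
  rw [hnorm, div_le_iff₀ two_pos]
  calc _ ≤ wA A T * ‖P (u + Complex.I • v)‖ ^ 2 + wA A T * ‖P (u - Complex.I • v)‖ ^ 2 :=
        (norm_sub_le _ _).trans (add_le_add (norm_inner_apply_self_le_wA hA hT _)
          (norm_inner_apply_self_le_wA hA hT _))
    _ = _ := by rw [← mul_add, hpar]; ring

theorem norm_inner_offDiag_le (hA : A.IsPositive) {T1 T2 : H →L[ℂ] H}
    (hC : BddAbove {r : ℝ | ∃ x : H, aNorm A x = 1 ∧ r = ‖⟪A ((T1 + T2) x), x⟫_ℂ‖})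
    (hD : BddAbove {r : ℝ | ∃ x : H, aNorm A x = 1 ∧ r = ‖⟪A ((T1 - T2) x), x⟫_ℂ‖}) (x y : H) :
    ‖⟪A (T1 y), x⟫_ℂ + ⟪A (T2 x), y⟫_ℂ‖ ≤
      (wA A (T1 + T2) + wA A (T1 - T2)) / 2 * (‖CFC.sqrt A x‖ ^ 2 + ‖CFC.sqrt A y‖ ^ 2) := by
  set P := CFC.sqrt A
  set u := x + y
  set v := x - y
  have hdecomp : ⟪A (T1 y), x⟫_ℂ + ⟪A (T2 x), y⟫_ℂ = (1 / 4 : ℂ) *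
      ((⟪A ((T1 + T2) u), u⟫_ℂ - ⟪A ((T1 + T2) v), v⟫_ℂ)
        + (⟪A ((T1 - T2) u), v⟫_ℂ - ⟪A ((T1 - T2) v), u⟫_ℂ)) := by
    simp only [u, v, map_add, map_sub, inner_add_left, inner_add_right, inner_sub_left,
      inner_sub_right, add_apply, sub_apply]
    ring
  have hpar : ‖P u‖ ^ 2 + ‖P v‖ ^ 2 = 2 * (‖P x‖ ^ 2 + ‖P y‖ ^ 2) := by
    rw [map_add, map_sub]
    linear_combination parallelogram_law_with_norm ℂ (P x) (P y)
  have hC' : ‖⟪A ((T1 + T2) u), u⟫_ℂ - ⟪A ((T1 + T2) v), v⟫_ℂ‖ ≤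
      wA A (T1 + T2) * (‖P u‖ ^ 2 + ‖P v‖ ^ 2) := by
    rw [mul_add]
    exact (norm_sub_le _ _).trans (add_le_add (norm_inner_apply_self_le_wA hA hC u)
      (norm_inner_apply_self_le_wA hA hC v))
  have hD' := norm_inner_apply_sub_inner_apply_le_wA hA hD u v
  rw [hdecomp, norm_mul]
  calc _ ≤ ‖(1 / 4 : ℂ)‖ * (wA A (T1 + T2) * (‖P u‖ ^ 2 + ‖P v‖ ^ 2)
        + wA A (T1 - T2) * (‖P u‖ ^ 2 + ‖P v‖ ^ 2)) := by
          gcongr; exact (norm_add_le _ _).trans (add_le_add hC' hD')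
    _ = _ := by rw [hpar]; norm_num; ring

theorem wB_offDiag_le (hA : A.IsPositive) {T1 T2 : H →L[ℂ] H}
    (hC : BddAbove {r : ℝ | ∃ x : H, aNorm A x = 1 ∧ r = ‖⟪A ((T1 + T2) x), x⟫_ℂ‖})
    (hD : BddAbove {r : ℝ | ∃ x : H, aNorm A x = 1 ∧ r = ‖⟪A ((T1 - T2) x), x⟫_ℂ‖}) :
    wB A 0 T1 T2 0 ≤ (wA A (T1 + T2) + wA A (T1 - T2)) / 2 := by
  refine Real.sSup_le ?_ (by linarith [wA_nonneg A (T1 + T2), wA_nonneg A (T1 - T2)])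
  rintro _ ⟨x, y, hxy, rfl⟩
  rw [re_inner_apply_self_eq_norm_sqrt_sq hA, re_inner_apply_self_eq_norm_sqrt_sq hA,
    Real.sqrt_eq_one] at hxy
  simpa [hxy] using norm_inner_offDiag_le hA hC hD x y

end

theorem stmt17_general (A T1 T2 : H →L[ℂ] H) (hA : A.IsPositive)
    (h1 : ∃ S : H →L[ℂ] H, A ∘L S = (ContinuousLinearMap.adjoint T1) ∘L A)
    (h2 : ∃ S : H →L[ℂ] H, A ∘L S = (ContinuousLinearMap.adjoint T2) ∘L A) :
    wB A 0 T1 T2 0 ≤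
      wA A T1 + wA A T2 - (1 / 2) * |wA A (T1 + T2) - wA A (T1 - T2)| := by
  obtain ⟨S1, hS1⟩ := h1
  obtain ⟨S2, hS2⟩ := h2
  have hT1 := bddAbove_of_aAdjoint hA hS1
  have hT2 := bddAbove_of_aAdjoint hA hS2
  have hC := bddAbove_of_aAdjoint hA (S := S1 + S2) (T := T1 + T2) (by
    rw [comp_add, map_add, add_comp, hS1, hS2])
  have hD := bddAbove_of_aAdjoint hA (S := S1 - S2) (T := T1 - T2) (by
    rw [comp_sub, map_sub, sub_comp, hS1, hS2])
  have hB := wB_offDiag_le hA hC hD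
  have hadd := wA_add_le hT1 hT2
  have hsub := wA_sub_le hT1 hT2
  rcases abs_cases (wA A (T1 + T2) - wA A (T1 - T2)) with ⟨h, -⟩ | ⟨h, -⟩ <;> rw [h] <;> linarith

theorem stmt17 (A T1 T2 : H →L[ℂ] H) (hA : A.IsPositive) (hA' : ∀ x : H, x ≠ 0 → 0 < (⟪A x, x⟫_ℂ).re)
    (h1 : ∃ S : H →L[ℂ] H, A ∘L S = (ContinuousLinearMap.adjoint T1) ∘L A)
    (h2 : ∃ S : H →L[ℂ] H, A ∘L S = (ContinuousLinearMap.adjoint T2) ∘L A) :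
    wB A 0 T1 T2 0 ≤
      wA A T1 + wA A T2 - (1 / 2) * |wA A (T1 + T2) - wA A (T1 - T2)| :=
  stmt17_general A T1 T2 hA h1 h2
end
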